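/- arXiv:2108.03486 — 2 statements merged into one kernel-verified Lean document; each statement's English description precedes it below -/
import Mathlib

section
/- Under the setting of Proposition 1, with Ω = D(1)D(1)ᵀ, Ωₓₓ = εᵀε positive definite, and Ω₀₀.ₓ the Schur complement of Ωₓₓ in Ω: rank(ξ⊥ᵀ Ċ(1) ε⊥) = rank(Ω₀₀.ₓ), and hence m − rank(Ω) = m₀ − rank(Ω₀₀.ₓ). -/
/-!
Write `D(1) = [F; E]` with `F = [D₀₀, D₀ₓ]` and `E = [D_{x0}, D_{xx}]`. Then
`ξ⊥ᵀ Ċ(1) ε⊥ = -F ε⊥`. As `EEᵀ` is invertible, `E` has rank `mₓ`, so the `m₀` independent columns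
of `ε⊥` span `ker E`, which is also the range of the orthogonal projection
`P = 1 - Eᵀ(EEᵀ)⁻¹E`. Hence `rank (F ε⊥) = rank (F P) = rank (F P (F P)ᵀ)`, and `F P Pᵀ Fᵀ` is the
Schur complement `Ω₀₀.ₓ = FFᵀ - FEᵀ(EEᵀ)⁻¹EFᵀ`. The second claim is Guttman's rank additivity
`rank Ω = rank Ω₀₀.ₓ + mₓ`, read off from the block LDU factorisation of `Ω`.
-/

open Matrix

namespace Submodule

variable {R M N : Type*} [Semiring R] [AddCommMonoid M] [AddCommMonoid N] [Module R M]
  [Module R N]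

theorem finrank_prod [StrongRankCondition R] (p : Submodule R M) (q : Submodule R N)
    [Module.Free R p] [Module.Free R q] [Module.Finite R p] [Module.Finite R q] :
    Module.finrank R (p.prod q) = Module.finrank R p + Module.finrank R q := by
  rw [← Module.finrank_prod]
  exact LinearEquiv.finrank_eq
    { toFun := fun x => (⟨x.1.1, x.2.1⟩, ⟨x.1.2, x.2.2⟩)
      invFun := fun x => ⟨(x.1.1, x.2.1), ⟨x.1.2, x.2.2⟩⟩
      map_add' := fun _ _ => rfl
      map_smul' := fun _ _ => rfl
      left_inv := fun _ => rfl
      right_inv := fun _ => rfl }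

end Submodule

namespace Matrix

variable {l m n o K : Type*} [Fintype n]

theorem rank_neg {R : Type*} [CommRing R] (M : Matrix l n R) : (-M).rank = M.rank := by
  have h : (-M).mulVecLin = -M.mulVecLin := by
    ext v
    simp
  rw [rank, rank, h, LinearMap.range_neg]

variable [Field K]

theorem rank_fromBlocks_zero_zero {n' : Type*} [Fintype m] (A : Matrix l m K)
    (D : Matrix n' n K) :
    (fromBlocks A 0 0 D).rank = A.rank + D.rank := by
  set e := LinearEquiv.sumArrowLequivProdArrow m n K K
  set e' := LinearEquiv.sumArrowLequivProdArrow l n' K K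
  have hblock : (fromBlocks A 0 0 D).mulVecLin =
      e'.symm.toLinearMap ∘ₗ (A.mulVecLin.prodMap D.mulVecLin) ∘ₗ e.toLinearMap := by
    refine LinearMap.ext fun v => ?_
    ext (i | i) <;> simp [e, e', fromBlocks_mulVec] <;> rfl
  rw [rank, hblock, LinearMap.range_comp, LinearMap.range_comp_of_range_eq_top _
    (LinearMap.range_eq_top.2 e.surjective), LinearEquiv.finrank_map_eq,
    LinearMap.range_prodMap, Submodule.finrank_prod]
  rfl

theorem rank_fromBlocks_of_invertible₂₂ [Fintype l] [Fintype m] [DecidableEq l] [DecidableEq m]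
    [DecidableEq n] (A : Matrix l m K) (B : Matrix l n K) (C : Matrix n m K) (D : Matrix n n K) [Invertible D] :
    (fromBlocks A B C D).rank = (A - B * ⅟D * C).rank + Fintype.card n := by
  rw [fromBlocks_eq_of_invertible₂₂, rank_mul_eq_left_of_isUnit_det _ _ (by simp),
    rank_mul_eq_right_of_isUnit_det _ _ (by simp), rank_fromBlocks_zero_zero,
    rank_of_isUnit _ (isUnit_of_invertible D)]

theorem range_mulVecLin_eq_ker_of_mul_eq_zero {E : Matrix l n K} {N : Matrix n o K}
    [Fintype o] (hEN : E * N = 0) (hrank : N.rank + E.rank = Fintype.card n) :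
    LinearMap.range N.mulVecLin = LinearMap.ker E.mulVecLin := by
  refine Submodule.eq_of_le_of_finrank_eq ?_ ?_
  · rintro _ ⟨v, rfl⟩
    simp [mulVec_mulVec, hEN]
  · have := LinearMap.finrank_range_add_finrank_ker E.mulVecLin
    rw [Module.finrank_fintype_fun_eq_card] at this
    change N.rank = _
    have : E.rank = Module.finrank K (LinearMap.range E.mulVecLin) := rfl
    omega

theorem rank_mul_eq_of_range_mulVecLin_eq {o' : Type*} [Fintype o] [Fintype o']
    {N : Matrix n o K} {N' : Matrix n o' K} (F : Matrix l n K)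
    (h : LinearMap.range N.mulVecLin = LinearMap.range N'.mulVecLin) :
    (F * N).rank = (F * N').rank := by
  rw [rank, rank, mulVecLin_mul, mulVecLin_mul, LinearMap.range_comp, LinearMap.range_comp, h]

section KerProj

variable [Fintype l] [DecidableEq l] [DecidableEq n] (E : Matrix l n K)

noncomputable def kerProj : Matrix n n K := 1 - Eᵀ * (E * Eᵀ)⁻¹ * E

variable {E}

theorem mul_kerProj (hE : IsUnit (E * Eᵀ).det) : E * kerProj E = 0 := by
  rw [kerProj, Matrix.mul_sub, Matrix.mul_one, ← Matrix.mul_assoc, ← Matrix.mul_assoc,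
    mul_nonsing_inv _ hE, Matrix.one_mul, sub_self]

theorem transpose_kerProj : (kerProj E)ᵀ = kerProj E := by
  simp [kerProj, transpose_nonsing_inv, Matrix.mul_assoc]

theorem kerProj_mul_self (hE : IsUnit (E * Eᵀ).det) : kerProj E * kerProj E = kerProj E := by
  nth_rw 1 [kerProj]
  rw [Matrix.sub_mul, Matrix.one_mul, Matrix.mul_assoc, mul_kerProj hE, Matrix.mul_zero, sub_zero]

theorem range_mulVecLin_kerProj (hE : IsUnit (E * Eᵀ).det) :
    LinearMap.range (kerProj E).mulVecLin = LinearMap.ker E.mulVecLin := by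
  refine le_antisymm ?_ fun v hv => ⟨v, ?_⟩
  · rintro _ ⟨v, rfl⟩
    simp [mulVec_mulVec, mul_kerProj hE]
  · have hv : E *ᵥ v = 0 := hv
    rw [mulVecLin_apply, kerProj, sub_mulVec, one_mulVec, ← mulVec_mulVec, hv, mulVec_zero,
      sub_zero]

theorem sub_mul_inv_mul_eq_mul_kerProj_mul_transpose {F : Matrix m n K}
    (hE : IsUnit (E * Eᵀ).det) :
    F * Fᵀ - F * Eᵀ * (E * Eᵀ)⁻¹ * (E * Fᵀ) = F * kerProj E * (F * kerProj E)ᵀ := by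
  rw [transpose_mul, transpose_kerProj, show F * kerProj E * (kerProj E * Fᵀ) =
    F * (kerProj E * kerProj E) * Fᵀ by simp only [Matrix.mul_assoc], kerProj_mul_self hE,
    kerProj]
  simp only [Matrix.mul_sub, Matrix.sub_mul, Matrix.mul_one, Matrix.mul_assoc]

end KerProj

/-- For `C(L) = [[(1 - L) I, A], [0, I]] D(L)` with `D(1) = [F; E]`, the left side is
`ξ⊥ᵀ Ċ(1)` with `ξ⊥ᵀ = [I, -A]`. -/
theorem fromCols_one_neg_mul_fromBlocks_add_fromBlocks {R : Type*} [Ring R] [DecidableEq l]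
    [Fintype l] [DecidableEq n] (A : Matrix l n R) (F : Matrix l o R) (E : Matrix n o R)
    (Ddot : Matrix (l ⊕ n) o R) :
    fromCols (1 : Matrix l l R) (-A) *
        (fromBlocks (-1 : Matrix l l R) 0 0 (0 : Matrix n n R) * fromRows F E +
          fromBlocks (0 : Matrix l l R) A 0 (1 : Matrix n n R) * Ddot) = -F := by
  rw [Matrix.mul_add, ← Matrix.mul_assoc, ← Matrix.mul_assoc, fromCols_mul_fromBlocks,
    fromCols_mul_fromBlocks]
  simp [fromCols_mul_fromRows]

end Matrix

/-- Under the setting of Proposition 1: with `Ω = D(1)D(1)ᵀ`,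
`Ωₓₓ = εᵀε` positive definite (`εᵀ = [D_{x0}(1), D_{xx}(1)]` the lower rows of
`D(1)`, `ε⊥` spanning its kernel), and `Ω₀₀.ₓ` the Schur complement of the
lower-right block of `Ω`, we have `rank(ξ⊥ᵀ Ċ(1) ε⊥) = rank(Ω₀₀.ₓ)` and hence
`m − rank(Ω) = m₀ − rank(Ω₀₀.ₓ)`. -/
theorem multicointegration_rank_eq {m₀ mₓ : ℕ}
    (A : Matrix (Fin m₀) (Fin mₓ) ℝ)
    (D₀₀ : Matrix (Fin m₀) (Fin m₀) ℝ) (D₀ₓ : Matrix (Fin m₀) (Fin mₓ) ℝ)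
    (Dx0 : Matrix (Fin mₓ) (Fin m₀) ℝ) (Dxx : Matrix (Fin mₓ) (Fin mₓ) ℝ)
    (Ddot : Matrix (Fin m₀ ⊕ Fin mₓ) (Fin m₀ ⊕ Fin mₓ) ℝ)
    (εperp : Matrix (Fin m₀ ⊕ Fin mₓ) (Fin m₀) ℝ)
    (D1 : Matrix (Fin m₀ ⊕ Fin mₓ) (Fin m₀ ⊕ Fin mₓ) ℝ)
    (hD1 : D1 = Matrix.fromBlocks D₀₀ D₀ₓ Dx0 Dxx)
    (Ω : Matrix (Fin m₀ ⊕ Fin mₓ) (Fin m₀ ⊕ Fin mₓ) ℝ)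
    (hΩ : Ω = D1 * D1ᵀ)
    (hxx : ((Matrix.fromCols Dx0 Dxx) * (Matrix.fromCols Dx0 Dxx)ᵀ).PosDef)
    (hεperp : εperp.rank = m₀)
    (hker : (Matrix.fromCols Dx0 Dxx) * εperp = 0)
    (Ω₀₀ₓ : Matrix (Fin m₀) (Fin m₀) ℝ)
    (hschur : Ω₀₀ₓ = Ω.toBlocks₁₁ - Ω.toBlocks₁₂ * (Ω.toBlocks₂₂)⁻¹ * Ω.toBlocks₂₁) :
    ((Matrix.fromCols (1 : Matrix (Fin m₀) (Fin m₀) ℝ) (-A)) *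
          ((Matrix.fromBlocks (-1) 0 0 0) * D1
            + (Matrix.fromBlocks 0 A 0 1) * Ddot) * εperp).rank = Ω₀₀ₓ.rank ∧
      (m₀ + mₓ) - Ω.rank = m₀ - Ω₀₀ₓ.rank := by
  set E := fromCols Dx0 Dxx
  set F := fromCols D₀₀ D₀ₓ
  have hD1' : D1 = fromRows F E := by rw [hD1, fromRows_fromCols_eq_fromBlocks]
  have hE : IsUnit (E * Eᵀ).det := hxx.det_pos.ne'.isUnit
  have hΩ' : Ω = fromBlocks (F * Fᵀ) (F * Eᵀ) (E * Fᵀ) (E * Eᵀ) := by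
    rw [hΩ, hD1', transpose_fromRows, fromRows_mul_fromCols]
  have hS : Ω₀₀ₓ = F * Fᵀ - F * Eᵀ * (E * Eᵀ)⁻¹ * (E * Fᵀ) := by simp [hschur, hΩ']
  have hrankE : E.rank = mₓ := by
    rw [← rank_self_mul_transpose, rank_of_isUnit _ ((isUnit_iff_isUnit_det _).2 hE),
      Fintype.card_fin]
  have hrangeε : LinearMap.range εperp.mulVecLin = LinearMap.ker E.mulVecLin :=
    range_mulVecLin_eq_ker_of_mul_eq_zero hker (by simp [hεperp, hrankE])
  have hrankS : Ω₀₀ₓ.rank = (F * εperp).rank := by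
    rw [hS, sub_mul_inv_mul_eq_mul_kerProj_mul_transpose hE, rank_self_mul_transpose]
    apply rank_mul_eq_of_range_mulVecLin_eq
    rw [range_mulVecLin_kerProj hE, hrangeε]
  have hrankΩ : Ω.rank = Ω₀₀ₓ.rank + mₓ := by
    let := invertibleOfIsUnitDet _ hE
    rw [hΩ', rank_fromBlocks_of_invertible₂₂, invOf_eq_nonsing_inv, ← hS, Fintype.card_fin]
  refine ⟨?_, ?_⟩
  · rw [hD1', fromCols_one_neg_mul_fromBlocks_add_fromBlocks, Matrix.neg_mul, rank_neg, hrankS]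
  · have := rank_le_width Ω₀₀ₓ
    omega
end

section
/- Exact FM-OLS error decomposition: with ŷ_t⁺ = y_t − Ω̂₀ₓΩ̂ₓₓ⁻¹Δx_t, y_t = A x_t + u_{0t}, u_{0.x,t} = u_{0t} − Ω₀ₓΩₓₓ⁻¹u_{xt}, Δx_t = u_{xt}, and Â⁺ = (Ŷ⁺ᵀX − TΔ̂₀ₓ⁺)(XᵀX)⁻¹, one has T(Â⁺ − A) = (T⁻¹U₀.ₓᵀX − Δ̃₀ₓ⁺)(T⁻²XᵀX)⁻¹ − Ω̃₀ₓ⁺ Ω̂ₓₓ⁻¹ (T⁻¹UₓᵀX − Δ̂ₓₓ)(T⁻²XᵀX)⁻¹. -/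
/-!
Substituting `y_t = A x_t + u_{0t}` into `ŷ_t⁺` shows that `Â⁺ − A` is the least-squares
projection of the residual `U₀ − Uₓ(Ω̂₀ₓΩ̂ₓₓ⁻¹)ᵀ`. The identity
`Ω̂₀ₓΩ̂ₓₓ⁻¹ = Ω₀ₓΩₓₓ⁻¹ + Ω̃₀ₓ⁺Ω̂ₓₓ⁻¹` rewrites that residual as `U₀.ₓ − Uₓ(Ω̃₀ₓ⁺Ω̂ₓₓ⁻¹)ᵀ`, and the
factor `T` is then split as `T⁻¹` on the numerator and `T²` on `(XᵀX)⁻¹`.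
-/

open Matrix

namespace Matrix

variable {K : Type*} [Field K] {l m n : Type*} [Fintype l] [Fintype n] [DecidableEq n]

theorem inv_smul_of_ne_zero {c : K} (hc : c ≠ 0) {M : Matrix n n K} (hM : IsUnit M.det) :
    (c • M)⁻¹ = c⁻¹ • M⁻¹ := by
  simpa [Units.smul_def] using inv_smul' M (Units.mk0 c hc) hM

theorem smul_mul_nonsing_inv_eq {c : K} (hc : c ≠ 0) {M : Matrix n n K} (hM : IsUnit M.det)
    (N : Matrix m n K) : c • (N * M⁻¹) = (c⁻¹ • N) * ((c ^ 2)⁻¹ • M)⁻¹ := by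
  rw [inv_smul_of_ne_zero (by positivity) hM, inv_inv, Matrix.smul_mul,
    Matrix.mul_smul, smul_smul, pow_two, inv_mul_cancel_left₀ hc]

theorem mul_nonsing_inv_sub_eq {M : Matrix n n K} (hM : IsUnit M.det) (B C : Matrix m n K) :
    B * M⁻¹ - C = (B - C * M) * M⁻¹ := by
  rw [Matrix.sub_mul, Matrix.mul_assoc, mul_nonsing_inv _ hM, Matrix.mul_one]

theorem transpose_mul_sub_mul_nonsing_inv_sub_eq {X : Matrix l n K} {Y U : Matrix l m K}
    {A : Matrix m n K} (hX : IsUnit (Xᵀ * X).det) (hY : Y = X * Aᵀ + U) (E : Matrix m n K) :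
    (Yᵀ * X - E) * (Xᵀ * X)⁻¹ - A = (Uᵀ * X - E) * (Xᵀ * X)⁻¹ := by
  rw [mul_nonsing_inv_sub_eq hX, hY, transpose_add, transpose_mul, transpose_transpose,
    Matrix.add_mul, Matrix.mul_assoc]
  abel_nf

end Matrix

theorem fmols_error_decomposition_general {T m₀ mₓ : ℕ} (hT : 0 < T)
    (X Ux : Matrix (Fin T) (Fin mₓ) ℝ)
    (Y U₀ U0x Yplus : Matrix (Fin T) (Fin m₀) ℝ)
    (A Aplus : Matrix (Fin m₀) (Fin mₓ) ℝ)
    (Ω₀ₓ Ωhat₀ₓ Δtilde Ωtilde : Matrix (Fin m₀) (Fin mₓ) ℝ)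
    (Ωₓₓ Ωhatₓₓ Δhatₓₓ : Matrix (Fin mₓ) (Fin mₓ) ℝ)
    (hX : IsUnit (Xᵀ * X).det) (hΩhatₓₓ : IsUnit Ωhatₓₓ.det)
    (hY : Y = X * Aᵀ + U₀)
    (hU0x : U0x = U₀ - Ux * (Ω₀ₓ * Ωₓₓ⁻¹)ᵀ)
    (hYplus : Yplus = Y - Ux * (Ωhat₀ₓ * Ωhatₓₓ⁻¹)ᵀ)
    (hΩtilde : Ωtilde = Ωhat₀ₓ - Ω₀ₓ * Ωₓₓ⁻¹ * Ωhatₓₓ)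
    (hAplus : Aplus
      = (Yplusᵀ * X - (T : ℝ) • (Δtilde - Ωtilde * Ωhatₓₓ⁻¹ * Δhatₓₓ)) * (Xᵀ * X)⁻¹) :
    (T : ℝ) • (Aplus - A)
      = ((T : ℝ)⁻¹ • (U0xᵀ * X) - Δtilde) * (((T : ℝ) ^ 2)⁻¹ • (Xᵀ * X))⁻¹
        - Ωtilde * Ωhatₓₓ⁻¹ * ((T : ℝ)⁻¹ • (Uxᵀ * X) - Δhatₓₓ)
            * (((T : ℝ) ^ 2)⁻¹ • (Xᵀ * X))⁻¹ := by
  have hT₀ : (T : ℝ) ≠ 0 := by positivity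
  have hΩratio : Ωhat₀ₓ * Ωhatₓₓ⁻¹ = Ω₀ₓ * Ωₓₓ⁻¹ + Ωtilde * Ωhatₓₓ⁻¹ := by
    rw [hΩtilde, ← mul_nonsing_inv_sub_eq hΩhatₓₓ]
    abel
  have hYplus' : Yplus = X * Aᵀ + (U0x - Ux * (Ωtilde * Ωhatₓₓ⁻¹)ᵀ) := by
    rw [hYplus, hY, hU0x, hΩratio, transpose_add, Matrix.mul_add]
    abel
  rw [hAplus, transpose_mul_sub_mul_nonsing_inv_sub_eq hX hYplus', smul_mul_nonsing_inv_eq hT₀ hX,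
    ← Matrix.sub_mul]
  congr 1
  simp only [transpose_sub, transpose_mul, transpose_transpose, Matrix.sub_mul, Matrix.mul_sub,
    smul_sub, smul_smul, inv_mul_cancel₀ hT₀, one_smul, Matrix.mul_smul, Matrix.mul_assoc]
  abel

/-- Exact finite-sample FM-OLS error decomposition:
`T(Â⁺ − A) = (T⁻¹U₀.ₓᵀX − Δ̃₀ₓ⁺)(T⁻²XᵀX)⁻¹ − Ω̃₀ₓ⁺Ω̂ₓₓ⁻¹(T⁻¹UₓᵀX − Δ̂ₓₓ)(T⁻²XᵀX)⁻¹`. -/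
theorem fmols_error_decomposition {T m₀ mₓ : ℕ} (hT : 0 < T)
    (X Ux : Matrix (Fin T) (Fin mₓ) ℝ)
    (Y U₀ U0x Yplus : Matrix (Fin T) (Fin m₀) ℝ)
    (A Aplus : Matrix (Fin m₀) (Fin mₓ) ℝ)
    (Ω₀ₓ Ωhat₀ₓ Δhat₀ₓ Δtilde Ωtilde : Matrix (Fin m₀) (Fin mₓ) ℝ)
    (Ωₓₓ Ωhatₓₓ Δhatₓₓ : Matrix (Fin mₓ) (Fin mₓ) ℝ)
    (hX : IsUnit (Xᵀ * X).det) (hΩhatₓₓ : IsUnit Ωhatₓₓ.det)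
    (hY : Y = X * Aᵀ + U₀)
    (hU0x : U0x = U₀ - Ux * (Ω₀ₓ * Ωₓₓ⁻¹)ᵀ)
    (hYplus : Yplus = Y - Ux * (Ωhat₀ₓ * Ωhatₓₓ⁻¹)ᵀ)
    (hΔtilde : Δtilde = Δhat₀ₓ - Ω₀ₓ * Ωₓₓ⁻¹ * Δhatₓₓ)
    (hΩtilde : Ωtilde = Ωhat₀ₓ - Ω₀ₓ * Ωₓₓ⁻¹ * Ωhatₓₓ)
    (hAplus : Aplus
      = (Yplusᵀ * X - (T : ℝ) • (Δtilde - Ωtilde * Ωhatₓₓ⁻¹ * Δhatₓₓ)) * (Xᵀ * X)⁻¹) :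
    (T : ℝ) • (Aplus - A)
      = ((T : ℝ)⁻¹ • (U0xᵀ * X) - Δtilde) * (((T : ℝ) ^ 2)⁻¹ • (Xᵀ * X))⁻¹
        - Ωtilde * Ωhatₓₓ⁻¹ * ((T : ℝ)⁻¹ • (Uxᵀ * X) - Δhatₓₓ)
            * (((T : ℝ) ^ 2)⁻¹ • (Xᵀ * X))⁻¹ :=
  fmols_error_decomposition_general hT X Ux Y U₀ U0x Yplus A Aplus Ω₀ₓ Ωhat₀ₓ Δtilde Ωtilde Ωₓₓ
    Ωhatₓₓ Δhatₓₓ hX hΩhatₓₓ hY hU0x hYplus hΩtilde hAplus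
end
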